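/- For k ≥ 1 the set {1,2,...,k} maximizes the sumset-divisor count d among all nonempty subsets of {0,1,...,k}; i.e., d(A) ≤ d({1,...,k}) for all nonempty A ⊆ {0,...,k}, with uniqueness of the maximizer when k ∉ {1, 3}. -/

import Mathlib

open Pointwise

/-- The number of sumset divisors of a finite set of naturals. -/
noncomputable def numDivisors (A : Finset ℕ) : ℕ :=
  {B : Finset ℕ | ∃ C : Finset ℕ, A = B + C}.ncard

/-!
If `t = min A`, every divisor of `A` is a translate by some `j ≤ t` of a divisor of `A - t`, so
`d(A) = (t + 1) d(A - t)`. For `0 ∈ A` with `max A = M`, refilling every gap of a divisor `B` by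
the arithmetic progression of step `M + 1 - max B` injects the divisors of `A` into those of
`[0, M]`, and the image misses `[0, j]` whenever `j < M` is not in `A`. So `d(A) ≤ E(M)`, where
`E(n) = d([0, n])`, with equality only if `A = [0, M]`.

The divisors of `[0, n]` are the sets containing `0` whose gaps are at most `n + 1 - max B`,
so `E(n)` is a sum of counts of compositions with bounded parts. Termwise estimates on
those counts give `E(n + 1) ≤ 2 E(n)` and `3 E(n) ≤ 2 E(n + 1)`, hence
`(t + 1) E(k - t) ≤ 2 E(k - 1) = d({1, …, k})`, strictly unless `t = 1` or `k ∈ {1, 3}`.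
-/

open Finset

/-- The number of compositions of `m` into parts of size at most `g`. -/
def boundedComps (g : ℕ) : ℕ → ℕ
  | 0 => 1
  | m + 1 => ∑ i ∈ (Ico (m + 1 - g) (m + 1)).attach, boundedComps g i
  decreasing_by exact (mem_Ico.mp i.2).2

namespace boundedComps

variable {g : ℕ}

@[simp] lemma zero_right (g : ℕ) : boundedComps g 0 = 1 := by
  rw [boundedComps]

lemma succ (g m : ℕ) :
    boundedComps g (m + 1) = ∑ i ∈ Ico (m + 1 - g) (m + 1), boundedComps g i := by
  rw [boundedComps, sum_attach]

lemma one_left (m : ℕ) : boundedComps 1 m = 1 := by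
  induction m with
  | zero => simp
  | succ m ih => simp [succ, ih]

lemma one_right (hg : 1 ≤ g) : boundedComps g 1 = 1 := by
  simp [succ, Nat.sub_eq_zero_of_le hg]

lemma two_right (hg : 2 ≤ g) : boundedComps g 2 = 2 := by
  rw [succ, Nat.sub_eq_zero_of_le hg, sum_Ico_succ_top (by omega), one_right (by omega)]
  simp

lemma le_succ (hg : 1 ≤ g) (m : ℕ) : boundedComps g m ≤ boundedComps g (m + 1) := by
  rw [succ]
  exact single_le_sum (f := boundedComps g) (fun _ _ ↦ Nat.zero_le _) (by simp; omega)

lemma pos (hg : 1 ≤ g) (m : ℕ) : 0 < boundedComps g m :=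
  (monotone_nat_of_le_succ (le_succ hg) (Nat.zero_le m)).trans_lt' (by simp)

lemma succ_le_two_mul (hg : 1 ≤ g) (m : ℕ) :
    boundedComps g (m + 1) ≤ 2 * boundedComps g m := by
  cases m with
  | zero => simp [one_right hg]
  | succ m =>
    have hwindow :
        ∑ i ∈ Ico (m + 1 + 1 - g) (m + 1), boundedComps g i ≤ boundedComps g (m + 1) := by
      rw [succ g m]
      exact sum_le_sum_of_subset (Ico_subset_Ico (by omega) le_rfl)
    rw [succ g (m + 1), sum_Ico_succ_top (by omega : m + 1 + 1 - g ≤ m + 1)]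
    omega

lemma add_le (hg : 2 ≤ g) (m : ℕ) :
    boundedComps g (m + 1) + boundedComps g m ≤ boundedComps g (m + 2) := by
  rw [succ g (m + 1)]
  calc boundedComps g (m + 1) + boundedComps g m = ∑ i ∈ Ico m (m + 2), boundedComps g i := by
        rw [sum_Ico_succ_top (by omega), sum_Ico_succ_top (by omega)]
        simp [add_comm]
    _ ≤ _ := sum_le_sum_of_subset (Ico_subset_Ico (by omega) le_rfl)

lemma add_add_le (hg : 3 ≤ g) (m : ℕ) :
    boundedComps g (m + 2) + boundedComps g (m + 1) + boundedComps g m ≤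
      boundedComps g (m + 3) := by
  rw [succ g (m + 2)]
  calc boundedComps g (m + 2) + boundedComps g (m + 1) + boundedComps g m
        = ∑ i ∈ Ico m (m + 3), boundedComps g i := by
        rw [sum_Ico_succ_top (by omega), sum_Ico_succ_top (by omega),
          sum_Ico_succ_top (by omega)]
        simp only [Ico_self, sum_empty]
        ring
    _ ≤ _ := sum_le_sum_of_subset (Ico_subset_Ico (by omega) le_rfl)

lemma three_mul_le (hg : 2 ≤ g) {m : ℕ} (hm : 1 ≤ m) :
    3 * boundedComps g m ≤ 2 * boundedComps g (m + 1) := by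
  obtain ⟨m, rfl⟩ := Nat.exists_eq_add_of_le' hm
  have := add_le hg m
  have := succ_le_two_mul (g := g) (by omega) m
  show 3 * boundedComps g (m + 1) ≤ 2 * boundedComps g (m + 2)
  omega

lemma three_mul_lt (hg : 3 ≤ g) {m : ℕ} (hm : 1 ≤ m) :
    3 * boundedComps g m < 2 * boundedComps g (m + 1) := by
  obtain ⟨m, rfl⟩ := Nat.exists_eq_add_of_le' hm
  cases m with
  | zero => simp [one_right (g := g) (by omega), two_right (g := g) (by omega)]
  | succ m =>
    have := add_add_le hg m
    have : boundedComps g (m + 2) ≤ 2 * boundedComps g (m + 1) := succ_le_two_mul (by omega) _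
    have := pos (g := g) (by omega) m
    show 3 * boundedComps g (m + 2) < 2 * boundedComps g (m + 3)
    omega

end boundedComps

/-- This is `numDivisors (range (n + 1))` (`numDivisors_range`): the term `g` counts the
divisors with largest element `n + 1 - g`. -/
def intervalDivCount (n : ℕ) : ℕ := ∑ g ∈ Icc 1 (n + 1), boundedComps g (n + 1 - g)

namespace intervalDivCount

@[simp] lemma zero : intervalDivCount 0 = 1 := by simp [intervalDivCount]

lemma eq_sum_add {n : ℕ} (hn : 1 ≤ n) :
    intervalDivCount n = ∑ g ∈ Icc 2 n, boundedComps g (n + 1 - g) + 2 := by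
  rw [intervalDivCount, sum_Icc_succ_top (by omega), ← insert_Icc_add_one_left_eq_Icc hn,
    sum_insert (by simp)]
  simp [boundedComps.one_left]
  ring

lemma succ_eq_sum_add {n : ℕ} (hn : 1 ≤ n) :
    intervalDivCount (n + 1) = ∑ g ∈ Icc 2 n, boundedComps g (n + 1 - g + 1) + 3 := by
  rw [intervalDivCount, sum_Icc_succ_top (by omega), sum_Icc_succ_top (by omega),
    ← insert_Icc_add_one_left_eq_Icc hn, sum_insert (by simp),
    sum_congr rfl (g := fun g ↦ boundedComps g (n + 1 - g + 1)) fun g hg ↦ by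
      rw [mem_Icc] at hg
      congr 1
      omega]
  simp [boundedComps.one_left, boundedComps.one_right]
  ring

lemma one : intervalDivCount 1 = 2 := by simp [eq_sum_add]

lemma two : intervalDivCount 2 = 3 := by simp [eq_sum_add, boundedComps.one_right]

lemma three : intervalDivCount 3 = 5 := by
  simp [succ_eq_sum_add (n := 2), boundedComps.two_right]

lemma strictMono : StrictMono intervalDivCount := by
  refine strictMono_nat_of_lt_succ fun n ↦ ?_
  rcases Nat.eq_zero_or_pos n with rfl | hn
  · simp [one]
  rw [eq_sum_add hn, succ_eq_sum_add hn]
  have := sum_le_sum fun g (hg : g ∈ Icc 2 n) ↦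
    boundedComps.le_succ (g := g) (by simp at hg; omega) (n + 1 - g)
  omega

lemma succ_lt_two_mul {n : ℕ} (hn : 1 ≤ n) :
    intervalDivCount (n + 1) < 2 * intervalDivCount n := by
  rw [eq_sum_add hn, succ_eq_sum_add hn, mul_add, mul_sum]
  have := sum_le_sum fun g (hg : g ∈ Icc 2 n) ↦
    boundedComps.succ_le_two_mul (g := g) (by simp at hg; omega) (n + 1 - g)
  omega

lemma succ_le_two_mul (n : ℕ) : intervalDivCount (n + 1) ≤ 2 * intervalDivCount n := by
  rcases Nat.eq_zero_or_pos n with rfl | hn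
  · simp [one]
  · exact (succ_lt_two_mul hn).le

lemma three_mul_le (n : ℕ) : 3 * intervalDivCount n ≤ 2 * intervalDivCount (n + 1) := by
  rcases Nat.eq_zero_or_pos n with rfl | hn
  · simp [one]
  rw [eq_sum_add hn, succ_eq_sum_add hn, mul_add, mul_add, mul_sum, mul_sum]
  have := sum_le_sum fun g (hg : g ∈ Icc 2 n) ↦
    boundedComps.three_mul_le (g := g) (m := n + 1 - g) (by simp at hg; omega)
      (by simp at hg; omega)
  omega

lemma three_mul_lt {n : ℕ} (hn : n ≠ 1) :
    3 * intervalDivCount n < 2 * intervalDivCount (n + 1) := by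
  match n, hn with
  | 0, _ => simp [one]
  | 2, _ => simp [two, three]
  | n + 3, _ =>
    rw [eq_sum_add (by omega), succ_eq_sum_add (by omega), mul_add, mul_add, mul_sum, mul_sum]
    have : ∑ g ∈ Icc 2 (n + 3), 3 * boundedComps g (n + 3 + 1 - g) <
        ∑ g ∈ Icc 2 (n + 3), 2 * boundedComps g (n + 3 + 1 - g + 1) :=
      sum_lt_sum
        (fun g hg ↦ boundedComps.three_mul_le (by simp at hg; omega) (by simp at hg; omega))
        ⟨3, by simp, boundedComps.three_mul_lt le_rfl (by omega)⟩
    omega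

lemma succ_mul_le_succ_mul {s : ℕ} (hs : 1 ≤ s) (j : ℕ) :
    (s + 2) * intervalDivCount j ≤ (s + 1) * intervalDivCount (j + 1) := by
  have := three_mul_le j
  nlinarith

lemma succ_mul_lt_succ_mul {s : ℕ} (hs : 2 ≤ s) (j : ℕ) :
    (s + 2) * intervalDivCount j < (s + 1) * intervalDivCount (j + 1) := by
  have := three_mul_le j
  have : 1 ≤ intervalDivCount j := zero ▸ strictMono.monotone (Nat.zero_le j)
  nlinarith

lemma succ_mul_sub_le {k t : ℕ} (hk : 1 ≤ k) (htk : t ≤ k) :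
    (t + 1) * intervalDivCount (k - t) ≤ 2 * intervalDivCount (k - 1) := by
  obtain ⟨k, rfl⟩ := Nat.exists_eq_add_of_le' hk
  rcases t with _ | t
  · simpa using succ_le_two_mul k
  induction t with
  | zero => simp
  | succ t ih =>
    calc (t + 1 + 1 + 1) * intervalDivCount (k + 1 - (t + 1 + 1))
        ≤ (t + 1 + 1) * intervalDivCount (k + 1 - (t + 1 + 1) + 1) :=
          succ_mul_le_succ_mul (by omega) _
      _ = (t + 1 + 1) * intervalDivCount (k + 1 - (t + 1)) := by congr 2; omega
      _ ≤ _ := ih (by omega)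

lemma succ_mul_sub_lt {k t : ℕ} (ht : 3 ≤ t) (htk : t ≤ k) :
    (t + 1) * intervalDivCount (k - t) < 2 * intervalDivCount (k - 1) := by
  obtain ⟨s, rfl⟩ := Nat.exists_eq_add_of_le' (by omega : 1 ≤ t)
  calc (s + 1 + 1) * intervalDivCount (k - (s + 1))
      < (s + 1) * intervalDivCount (k - (s + 1) + 1) := succ_mul_lt_succ_mul (by omega) _
    _ = (s + 1) * intervalDivCount (k - s) := by congr 2; omega
    _ ≤ _ := succ_mul_sub_le (by omega) (by omega)

lemma eq_one_of_succ_mul_sub_eq {k t : ℕ} (hk1 : k ≠ 1) (hk3 : k ≠ 3) (htk : t ≤ k)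
    (h : (t + 1) * intervalDivCount (k - t) = 2 * intervalDivCount (k - 1)) : t = 1 := by
  match t with
  | 0 =>
    rcases Nat.lt_or_ge k 2 with hk | hk
    · obtain rfl : k = 0 := by omega
      simp at h
    · have := succ_lt_two_mul (n := k - 1) (by omega)
      rw [Nat.sub_add_cancel (by omega)] at this
      rw [zero_add, one_mul, Nat.sub_zero] at h
      omega
  | 1 => rfl
  | 2 =>
    have := three_mul_lt (n := k - 2) (by omega)
    rw [show k - 2 + 1 = k - 1 by omega] at this
    omega
  | t + 3 => exact absurd h (succ_mul_sub_lt (by omega) htk).ne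

end intervalDivCount

section Sumset

variable {B C : Finset ℕ} {j n : ℕ}

lemma sup_id_mem (hB : B.Nonempty) : B.sup id ∈ B := by
  obtain ⟨b, hb, h⟩ := exists_mem_eq_sup B hB id
  exact h ▸ hb

lemma subset_range_sup_id_succ (B : Finset ℕ) : B ⊆ range (B.sup id + 1) :=
  fun _ hb ↦ mem_range.mpr (Nat.lt_succ_of_le (le_sup (f := id) hb))

lemma sup_id_le_of_subset_range (hB : B ⊆ range (n + 1)) : B.sup id ≤ n :=
  Finset.sup_le fun _ hb ↦ Nat.le_of_lt_succ (mem_range.mp (hB hb))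

lemma sup_id_range (n : ℕ) : (range (n + 1)).sup id = n :=
  le_antisymm (sup_id_le_of_subset_range subset_rfl) (le_sup (f := id) (self_mem_range_succ n))

lemma sup_id_add (hB : B.Nonempty) (hC : C.Nonempty) :
    (B + C).sup id = B.sup id + C.sup id := by
  refine le_antisymm (Finset.sup_le fun x hx ↦ ?_)
    (le_sup (f := id) (add_mem_add (sup_id_mem hB) (sup_id_mem hC)))
  obtain ⟨b, hb, c, hc, rfl⟩ := mem_add.mp hx
  exact Nat.add_le_add (le_sup (f := id) hb) (le_sup (f := id) hc)

lemma zero_mem_left_of_zero_mem_add (h : 0 ∈ B + C) : 0 ∈ B := by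
  obtain ⟨b, hb, c, -, hbc⟩ := mem_add.mp h
  rwa [(Nat.add_eq_zero_iff.mp hbc).1] at hb

lemma subset_add_of_zero_mem (h : 0 ∈ B + C) : B ⊆ B + C := fun b hb ↦
  mem_add.mpr ⟨b, hb, 0, zero_mem_left_of_zero_mem_add (add_comm B C ▸ h), rfl⟩

lemma le_of_mem_add_singleton {x : ℕ} (hx : x ∈ B + {j}) : j ≤ x := by
  obtain ⟨b, -, c, hc, rfl⟩ := mem_add.mp hx
  rw [mem_singleton.mp hc]
  exact Nat.le_add_left j b

lemma mem_add_singleton_self (h0 : 0 ∈ B) : j ∈ B + {j} :=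
  mem_add.mpr ⟨0, h0, j, mem_singleton_self j, zero_add j⟩

lemma add_singleton_injective (j : ℕ) : Function.Injective (· + ({j} : Finset ℕ)) := by
  intro B B' h
  ext x
  simpa [mem_add] using congrArg (x + j ∈ ·) h

lemma image_sub_add_singleton (h : ∀ b ∈ B, j ≤ b) : B.image (· - j) + {j} = B := by
  ext x
  simp only [mem_add, mem_image, mem_singleton]
  constructor
  · rintro ⟨_, ⟨b, hb, rfl⟩, _, rfl, rfl⟩
    rwa [Nat.sub_add_cancel (h b hb)]
  · exact fun hx ↦ ⟨x - j, ⟨x, hx, rfl⟩, j, rfl, Nat.sub_add_cancel (h x hx)⟩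

lemma zero_mem_image_sub_min' (hB : B.Nonempty) : 0 ∈ B.image (· - B.min' hB) :=
  mem_image.mpr ⟨_, min'_mem B hB, Nat.sub_self _⟩

lemma image_sub_min'_add_singleton (hB : B.Nonempty) :
    B.image (· - B.min' hB) + {B.min' hB} = B :=
  image_sub_add_singleton fun b hb ↦ min'_le B b hb

lemma Icc_eq_range_add_singleton {k : ℕ} (hjk : j ≤ k) : Icc j k = range (k - j + 1) + {j} := by
  ext x
  simp only [mem_Icc, mem_add, mem_range, mem_singleton, exists_eq_left]
  constructor
  · exact fun hx ↦ ⟨x - j, by omega, by omega⟩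
  · rintro ⟨y, hy, rfl⟩
    omega

end Sumset

open scoped Classical in
noncomputable def sumsetDivisors (A : Finset ℕ) : Finset (Finset ℕ) :=
  (range (A.sup id + 1)).powerset.filter fun B ↦ ∃ C, A = B + C

section Divisors

variable {A B C : Finset ℕ}

lemma mem_sumsetDivisors (hA : A.Nonempty) : B ∈ sumsetDivisors A ↔ ∃ C, A = B + C := by
  simp only [sumsetDivisors, mem_filter, mem_powerset, and_iff_right_iff_imp]
  rintro ⟨C, hBC⟩ b hb
  obtain ⟨c, hc⟩ := (hBC ▸ hA).of_add_right
  have : b + c ≤ A.sup id := le_sup (f := id) (hBC ▸ add_mem_add hb hc)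
  rw [mem_range]
  omega

lemma numDivisors_eq_card (hA : A.Nonempty) : numDivisors A = #(sumsetDivisors A) := by
  rw [numDivisors, ← Set.ncard_coe_finset]
  congr 1
  ext B
  exact (mem_sumsetDivisors hA).symm

lemma zero_mem_of_mem_sumsetDivisors (h0 : 0 ∈ A) (hB : B ∈ sumsetDivisors A) : 0 ∈ B := by
  obtain ⟨C, rfl⟩ := (mem_sumsetDivisors ⟨0, h0⟩).mp hB
  exact zero_mem_left_of_zero_mem_add h0

/-- Translate `B` and `C` down so that their least elements become `0`. -/
lemma exists_eq_add_singleton_of_add_singleton_eq {t : ℕ} (h0 : 0 ∈ A) (h : A + {t} = B + C) :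
    ∃ j ≤ t, ∃ B₀, B = B₀ + {j} ∧ ∃ C₀, A = B₀ + C₀ := by
  have hne : (B + C).Nonempty := h ▸ Nonempty.add ⟨0, h0⟩ (singleton_nonempty t)
  obtain ⟨hB, hC⟩ : B.Nonempty ∧ C.Nonempty := ⟨hne.of_add_left, hne.of_add_right⟩
  set j := B.min' hB
  set c := C.min' hC
  have hjc : j + c = t := by
    apply le_antisymm
    · obtain ⟨b, hb, c', hc', hbc⟩ := mem_add.mp (h ▸ add_mem_add h0 (mem_singleton_self t))
      rw [zero_add] at hbc
      exact hbc ▸ Nat.add_le_add (min'_le B b hb) (min'_le C c' hc')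
    · exact le_of_mem_add_singleton (h ▸ add_mem_add (min'_mem B hB) (min'_mem C hC))
  have hB₀ := image_sub_add_singleton (j := j) fun b hb ↦ min'_le B b hb
  have hC₀ := image_sub_add_singleton (j := c) fun c hc ↦ min'_le C c hc
  refine ⟨j, by omega, _, hB₀.symm, C.image (· - c), add_singleton_injective t ?_⟩
  calc A + {t} = B + C := h
    _ = (B.image (· - j) + {j}) + (C.image (· - c) + {c}) := by rw [hB₀, hC₀]
    _ = _ := by rw [add_add_add_comm, singleton_add_singleton, hjc]

lemma sumsetDivisors_add_singleton (h0 : 0 ∈ A) (t : ℕ) :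
    sumsetDivisors (A + {t}) =
      (range (t + 1) ×ˢ sumsetDivisors A).image fun p ↦ p.2 + {p.1} := by
  have hA : A.Nonempty := ⟨0, h0⟩
  ext B
  simp only [mem_image, mem_product, mem_range, Prod.exists, mem_sumsetDivisors hA,
    mem_sumsetDivisors (hA.add (singleton_nonempty t))]
  constructor
  · rintro ⟨C, hBC⟩
    obtain ⟨j, hjt, B₀, rfl, hB₀⟩ := exists_eq_add_singleton_of_add_singleton_eq h0 hBC
    exact ⟨j, B₀, ⟨by omega, hB₀⟩, rfl⟩
  · rintro ⟨j, B₀, ⟨hjt, C₀, rfl⟩, rfl⟩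
    refine ⟨C₀ + {t - j}, ?_⟩
    rw [add_add_add_comm, singleton_add_singleton, Nat.add_sub_cancel' (by omega)]

lemma numDivisors_add_singleton (h0 : 0 ∈ A) (t : ℕ) :
    numDivisors (A + {t}) = (t + 1) * numDivisors A := by
  have hA : A.Nonempty := ⟨0, h0⟩
  rw [numDivisors_eq_card (hA.add (singleton_nonempty t)), numDivisors_eq_card hA,
    sumsetDivisors_add_singleton h0, card_image_of_injOn, card_product, card_range]
  rintro ⟨j, B⟩ hjB ⟨j', B'⟩ hjB' h
  simp only [coe_product, Set.mem_prod, mem_coe] at hjB hjB' h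
  have hj : j ∈ B' + {j'} :=
    h ▸ mem_add_singleton_self (zero_mem_of_mem_sumsetDivisors h0 hjB.2)
  have hj' : j' ∈ B + {j} :=
    h ▸ mem_add_singleton_self (zero_mem_of_mem_sumsetDivisors h0 hjB'.2)
  obtain rfl : j = j' := le_antisymm (le_of_mem_add_singleton hj') (le_of_mem_add_singleton hj)
  rw [add_singleton_injective j h]

lemma numDivisors_eq_succ_min'_mul (hA : A.Nonempty) :
    numDivisors A = (A.min' hA + 1) * numDivisors (A.image (· - A.min' hA)) := by
  rw [← numDivisors_add_singleton (zero_mem_image_sub_min' hA), image_sub_min'_add_singleton]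

end Divisors

def GapBounded (g m : ℕ) (B : Finset ℕ) : Prop :=
  ∀ x ∈ B, x < m → ∃ y ∈ B, x < y ∧ y ≤ x + g

open scoped Classical in
noncomputable def gapBoundedSets (g m : ℕ) : Finset (Finset ℕ) :=
  (range (m + 1)).powerset.filter fun B ↦ 0 ∈ B ∧ m ∈ B ∧ GapBounded g m B

section GapBounded

variable {B S : Finset ℕ} {g m : ℕ}

lemma mem_gapBoundedSets :
    B ∈ gapBoundedSets g m ↔
      B ⊆ range (m + 1) ∧ 0 ∈ B ∧ m ∈ B ∧ GapBounded g m B := by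
  simp only [gapBoundedSets, mem_filter, mem_powerset]

lemma sup_id_eq_of_mem_gapBoundedSets (hB : B ∈ gapBoundedSets g m) : B.sup id = m := by
  obtain ⟨hB, -, hm, -⟩ := mem_gapBoundedSets.mp hB
  exact le_antisymm (sup_id_le_of_subset_range hB) (le_sup (f := id) hm)

lemma add_range_eq_range (hS : S ⊆ range (m + 1)) (h0 : 0 ∈ S) (hgap : GapBounded g m S) :
    S + range g = range (m + g) := by
  ext a
  simp only [mem_add, mem_range]
  constructor
  · rintro ⟨s, hs, c, hc, rfl⟩
    have := mem_range.mp (hS hs)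
    omega
  intro ha
  set x := (S.filter (· ≤ a)).sup id
  have hx : x ∈ S ∧ x ≤ a := mem_filter.mp (sup_id_mem ⟨0, by simp [h0]⟩)
  refine ⟨x, hx.1, a - x, ?_, by omega⟩
  by_contra! hgx
  have hxm : x < m := by
    have := mem_range.mp (hS hx.1)
    omega
  obtain ⟨y, hy, hxy, hyx⟩ := hgap x hx.1 hxm
  have : y ≤ x := le_sup (f := id) (mem_filter.mpr ⟨hy, by omega⟩)
  omega

lemma sumsetDivisors_range (n : ℕ) :
    sumsetDivisors (range (n + 1)) =
      (range (n + 1)).biUnion fun m ↦ gapBoundedSets (n + 1 - m) m := by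
  ext B
  simp only [mem_sumsetDivisors nonempty_range_add_one, mem_biUnion, mem_range,
    mem_gapBoundedSets]
  constructor
  · rintro ⟨C, hBC⟩
    have h0 : 0 ∈ B + C := hBC ▸ mem_range.mpr n.succ_pos
    have hB : B.Nonempty := ⟨0, zero_mem_left_of_zero_mem_add h0⟩
    have hC : C.Nonempty := ⟨0, zero_mem_left_of_zero_mem_add (add_comm B C ▸ h0)⟩
    have hsup : n = B.sup id + C.sup id := by rw [← sup_id_add hB hC, ← hBC, sup_id_range]
    refine ⟨B.sup id, by omega, subset_range_sup_id_succ B, zero_mem_left_of_zero_mem_add h0,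
      sup_id_mem hB, fun x hx hxm ↦ ?_⟩
    obtain ⟨b, hb, c, hc, hbc⟩ :=
      mem_add.mp (hBC ▸ mem_range.mpr (by omega : x + (n - B.sup id) + 1 < n + 1))
    have : c ≤ C.sup id := le_sup (f := id) hc
    exact ⟨b, hb, by omega, by omega⟩
  · rintro ⟨m, hmn, hB, h0, -, hgap⟩
    refine ⟨range (n + 1 - m), ?_⟩
    rw [add_range_eq_range hB h0 hgap, Nat.add_sub_cancel' (by omega)]

lemma gapBoundedSets_zero (g : ℕ) : gapBoundedSets g 0 = {{0}} := by
  ext B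
  simp only [mem_gapBoundedSets, mem_singleton]
  constructor
  · rintro ⟨hB, h0, -, -⟩
    exact eq_singleton_iff_unique_mem.mpr ⟨h0, fun x hx ↦ by simpa using hB hx⟩
  · rintro rfl
    simp [GapBounded]

/-- The preimage of `B` is `B.erase (m + 1)`, whose largest element is at least `m + 1 - g` by
the gap condition at that element. -/
lemma gapBoundedSets_succ (g m : ℕ) :
    gapBoundedSets g (m + 1) =
      (Ico (m + 1 - g) (m + 1)).biUnion fun i ↦ (gapBoundedSets g i).image (insert (m + 1)) := by
  ext B
  simp only [mem_biUnion, mem_image, mem_Ico, mem_gapBoundedSets]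
  constructor
  · rintro ⟨hB, h0, hm, hgap⟩
    set B' := B.erase (m + 1)
    have h0' : 0 ∈ B' := mem_erase.mpr ⟨by omega, h0⟩
    set i := B'.sup id
    have hi : i ∈ B' := sup_id_mem ⟨0, h0'⟩
    have hB' : ∀ x ∈ B, x ≤ i ∨ x = m + 1 := fun x hx ↦ by
      by_cases hxm : x = m + 1
      · exact Or.inr hxm
      · exact Or.inl (le_sup (f := id) (mem_erase.mpr ⟨hxm, hx⟩))
    have him : i ≤ m := by
      have := mem_range.mp (hB (mem_of_mem_erase hi))
      have := ne_of_mem_erase hi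
      omega
    obtain ⟨y, hy, hiy, hyi⟩ := hgap i (mem_of_mem_erase hi) (by omega)
    refine ⟨i, ⟨by rcases hB' y hy with h | h <;> omega, by omega⟩, B',
      ⟨subset_range_sup_id_succ B', h0', hi, fun x hx hxi ↦ ?_⟩, insert_erase hm⟩
    obtain ⟨y, hy, hxy, hyx⟩ := hgap x (mem_of_mem_erase hx) (by omega)
    by_cases hym : y = m + 1
    · exact ⟨i, hi, hxi, by omega⟩
    · exact ⟨y, mem_erase.mpr ⟨hym, hy⟩, hxy, hyx⟩
  · rintro ⟨i, ⟨hgi, him⟩, B', ⟨hB', h0', hi, hgap⟩, rfl⟩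
    have hB'i : ∀ x ∈ B', x ≤ i := fun x hx ↦ Nat.le_of_lt_succ (mem_range.mp (hB' hx))
    refine ⟨insert_subset (self_mem_range_succ _) fun x hx ↦ mem_range.mpr ?_,
      mem_insert_of_mem h0', mem_insert_self _ _, fun x hx hxm ↦ ?_⟩
    · have := hB'i x hx
      omega
    obtain rfl | hx := mem_insert.mp hx
    · omega
    rcases (hB'i x hx).lt_or_eq with hxi | rfl
    · obtain ⟨y, hy, hxy, hyx⟩ := hgap x hx hxi
      exact ⟨y, mem_insert_of_mem hy, hxy, hyx⟩
    · exact ⟨m + 1, mem_insert_self _ _, hxm, by omega⟩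

lemma card_gapBoundedSets (g m : ℕ) : #(gapBoundedSets g m) = boundedComps g m := by
  induction m using Nat.strong_induction_on with
  | _ m ih =>
  cases m with
  | zero => simp [gapBoundedSets_zero]
  | succ m =>
    have herase : ∀ i ∈ Ico (m + 1 - g) (m + 1), ∀ B ∈ gapBoundedSets g i,
        (insert (m + 1) B).erase (m + 1) = B := fun i hi B hB ↦ erase_insert fun h ↦ by
      have := mem_range.mp ((mem_gapBoundedSets.mp hB).1 h)
      have := mem_Ico.mp hi
      omega
    rw [gapBoundedSets_succ, card_biUnion, boundedComps.succ]
    · refine sum_congr rfl fun i hi ↦ ?_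
      rw [card_image_of_injOn, ih i (mem_Ico.mp hi).2]
      intro B hB B' hB' h
      rw [← herase i hi B hB, ← herase i hi B' hB']
      exact congrArg (erase · (m + 1)) h
    · intro i hi i' hi' hii'
      refine disjoint_left.mpr fun X hX hX' ↦ hii' ?_
      obtain ⟨B, hB, rfl⟩ := mem_image.mp hX
      obtain ⟨B', hB', h⟩ := mem_image.mp hX'
      rw [← sup_id_eq_of_mem_gapBoundedSets hB, ← sup_id_eq_of_mem_gapBoundedSets hB',
        ← herase i hi B hB, ← herase i' hi' B' hB', h]

lemma numDivisors_range (n : ℕ) : numDivisors (range (n + 1)) = intervalDivCount n := by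
  rw [numDivisors_eq_card nonempty_range_add_one, sumsetDivisors_range, card_biUnion]
  · refine sum_nbij' (fun m ↦ n + 1 - m) (fun g ↦ n + 1 - g) ?_ ?_ ?_ ?_ ?_
    all_goals intro m hm
    all_goals simp only [mem_Icc, mem_range] at hm ⊢
    · omega
    · omega
    · omega
    · omega
    · rw [card_gapBoundedSets, Nat.sub_sub_self (by omega)]
  · intro m _ m' _ hmm'
    refine disjoint_left.mpr fun X hX hX' ↦ hmm' ?_
    rw [← sup_id_eq_of_mem_gapBoundedSets hX, sup_id_eq_of_mem_gapBoundedSets hX']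

end GapBounded

def floorIn (B : Finset ℕ) (x : ℕ) : ℕ := (B.filter (· ≤ x)).sup id

/-- Refill each gap of `B` by the arithmetic progression of step `g` starting at its left end. -/
def fillGaps (g : ℕ) (B : Finset ℕ) : Finset ℕ :=
  (range (B.sup id + 1)).filter fun x ↦ g ∣ x - floorIn B x

section FillGaps

variable {B : Finset ℕ} {b g x : ℕ}

lemma le_floorIn (hb : b ∈ B) (hbx : b ≤ x) : b ≤ floorIn B x :=
  le_sup (f := id) (mem_filter.mpr ⟨hb, hbx⟩)

lemma floorIn_le : floorIn B x ≤ x :=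
  Finset.sup_le fun _ hb ↦ (mem_filter.mp hb).2

lemma floorIn_mem (hb : b ∈ B) (hbx : b ≤ x) : floorIn B x ∈ B :=
  (mem_filter.mp (sup_id_mem ⟨b, mem_filter.mpr ⟨hb, hbx⟩⟩)).1

lemma floorIn_eq_self (hx : x ∈ B) : floorIn B x = x :=
  le_antisymm floorIn_le (le_floorIn hx le_rfl)

lemma mem_fillGaps : x ∈ fillGaps g B ↔ x ≤ B.sup id ∧ g ∣ x - floorIn B x := by
  simp only [fillGaps, mem_filter, mem_range, Nat.lt_succ_iff]

lemma subset_fillGaps : B ⊆ fillGaps g B := fun x hx ↦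
  mem_fillGaps.mpr ⟨le_sup (f := id) hx, by simp [floorIn_eq_self hx]⟩

lemma sup_id_fillGaps (hB : B.Nonempty) : (fillGaps g B).sup id = B.sup id :=
  le_antisymm (Finset.sup_le fun _ hx ↦ (mem_fillGaps.mp hx).1)
    (le_sup (f := id) (subset_fillGaps (sup_id_mem hB)))

lemma gapBounded_fillGaps (hg : 1 ≤ g) (h0 : 0 ∈ B) :
    GapBounded g (B.sup id) (fillGaps g B) := by
  intro x hx hxm
  obtain ⟨-, hdvd⟩ := mem_fillGaps.mp hx
  have hnext : (B.filter (x < ·)).Nonempty :=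
    ⟨B.sup id, mem_filter.mpr ⟨sup_id_mem ⟨0, h0⟩, hxm⟩⟩
  set b := (B.filter (x < ·)).min' hnext
  obtain ⟨hb, hxb⟩ := mem_filter.mp (min'_mem _ hnext)
  by_cases hbx : b ≤ x + g
  · exact ⟨b, subset_fillGaps hb, hxb, hbx⟩
  refine ⟨x + g, mem_fillGaps.mpr ⟨?_, ?_⟩, by omega, le_rfl⟩
  · have : b ≤ B.sup id := le_sup (f := id) hb
    omega
  have hfloor : floorIn B (x + g) = floorIn B x := by
    refine le_antisymm (Finset.sup_le fun c hc ↦ ?_)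
      (le_floorIn (floorIn_mem h0 (Nat.zero_le x)) (floorIn_le.trans (by omega)))
    obtain ⟨hc, hcx⟩ := mem_filter.mp hc
    refine le_floorIn hc (not_lt.mp fun hxc ↦ hbx ?_)
    exact (min'_le _ c (mem_filter.mpr ⟨hc, hxc⟩)).trans hcx
  rw [hfloor, Nat.sub_add_comm floorIn_le]
  exact dvd_add hdvd dvd_rfl

lemma succ_mem_of_mem_fillGaps (hg : 2 ≤ g) (hx : x ∈ B) (hx1 : x + 1 ∈ fillGaps g B) :
    x + 1 ∈ B := by
  by_contra hx1B
  have hfloor : floorIn B (x + 1) = x := by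
    have := le_floorIn hx (by omega : x ≤ x + 1)
    have := floorIn_le (B := B) (x := x + 1)
    have : floorIn B (x + 1) ≠ x + 1 := fun h ↦ hx1B (h ▸ floorIn_mem hx (by omega))
    omega
  have := Nat.le_of_dvd one_pos (by simpa [hfloor] using (mem_fillGaps.mp hx1).2)
  omega

lemma fillGaps_mem_gapBoundedSets (hg : 1 ≤ g) (h0 : 0 ∈ B) :
    fillGaps g B ∈ gapBoundedSets g (B.sup id) :=
  mem_gapBoundedSets.mpr ⟨fun _ hx ↦ mem_range.mpr (Nat.lt_succ_of_le (mem_fillGaps.mp hx).1),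
    subset_fillGaps h0, subset_fillGaps (sup_id_mem ⟨0, h0⟩), gapBounded_fillGaps hg h0⟩

end FillGaps

/-- The step `max A + 1 - max B` exceeds every element of a complementary divisor `C`, which is
what makes this injective on the divisors of `A`. -/
def intervalDivisorOf (A B : Finset ℕ) : Finset ℕ := fillGaps (A.sup id + 1 - B.sup id) B

section IntervalComparison

variable {A B B' : Finset ℕ} {n : ℕ}

lemma sup_id_intervalDivisorOf (hB : B.Nonempty) :
    (intervalDivisorOf A B).sup id = B.sup id :=
  sup_id_fillGaps hB

lemma intervalDivisorOf_mem_sumsetDivisors (h0 : 0 ∈ A) (hB : B ∈ sumsetDivisors A) :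
    intervalDivisorOf A B ∈ sumsetDivisors (range (A.sup id + 1)) := by
  obtain ⟨C, rfl⟩ := (mem_sumsetDivisors ⟨0, h0⟩).mp hB
  have hBA : B.sup id ≤ (B + C).sup id := sup_mono (subset_add_of_zero_mem h0)
  rw [sumsetDivisors_range, mem_biUnion]
  exact ⟨B.sup id, mem_range.mpr (by omega),
    fillGaps_mem_gapBoundedSets (by omega) (zero_mem_left_of_zero_mem_add h0)⟩

lemma subset_of_intervalDivisorOf_eq (h0 : 0 ∈ A) (hB : B ∈ sumsetDivisors A)
    (hB' : B' ∈ sumsetDivisors A) (h : intervalDivisorOf A B = intervalDivisorOf A B') :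
    B ⊆ B' := by
  have h0B := zero_mem_of_mem_sumsetDivisors h0 hB
  have h0B' := zero_mem_of_mem_sumsetDivisors h0 hB'
  have hsup : B.sup id = B'.sup id := by
    rw [← sup_id_intervalDivisorOf (A := A) ⟨0, h0B⟩, h,
      sup_id_intervalDivisorOf ⟨0, h0B'⟩]
  obtain ⟨C', rfl⟩ := (mem_sumsetDivisors ⟨0, h0⟩).mp hB'
  have hA := sup_id_add ⟨0, h0B'⟩ ⟨0, zero_mem_left_of_zero_mem_add (add_comm B' C' ▸ h0)⟩
  intro s hs
  by_contra hsB'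
  have hf : floorIn B' s < s :=
    lt_of_le_of_ne floorIn_le fun hfs ↦ hsB' (hfs ▸ floorIn_mem h0B' (Nat.zero_le s))
  have hsfill : s ∈ intervalDivisorOf (B' + C') B' := h ▸ subset_fillGaps hs
  rw [intervalDivisorOf, ← hsup] at hsfill
  have hgap := Nat.le_of_dvd (by omega) (mem_fillGaps.mp hsfill).2
  obtain ⟨C, hC⟩ := (mem_sumsetDivisors ⟨0, h0⟩).mp hB
  obtain ⟨b, hb, c, hc, rfl⟩ := mem_add.mp (hC ▸ subset_add_of_zero_mem (hC ▸ h0) hs)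
  have : c ≤ C'.sup id := le_sup (f := id) hc
  have : b ≤ floorIn B' (b + c) := le_floorIn hb (Nat.le_add_right b c)
  omega

lemma intervalDivisorOf_injOn (h0 : 0 ∈ A) :
    Set.InjOn (intervalDivisorOf A) (sumsetDivisors A) :=
  fun _ hB _ hB' h ↦ Subset.antisymm (subset_of_intervalDivisorOf_eq h0 hB hB' h)
    (subset_of_intervalDivisorOf_eq h0 hB' hB h.symm)

lemma range_succ_mem_sumsetDivisors_range {j : ℕ} (hjn : j ≤ n) :
    range (j + 1) ∈ sumsetDivisors (range (n + 1)) := by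
  rw [sumsetDivisors_range, mem_biUnion]
  refine ⟨j, mem_range.mpr (by omega),
    mem_gapBoundedSets.mpr ⟨subset_rfl, by simp, by simp, ?_⟩⟩
  exact fun x _ hxj ↦ ⟨x + 1, mem_range.mpr (by omega), by omega, by omega⟩

lemma range_succ_notMem_image_intervalDivisorOf (h0 : 0 ∈ A) {j : ℕ} (hjA : j ∉ A)
    (hj : j < A.sup id) : range (j + 1) ∉ (sumsetDivisors A).image (intervalDivisorOf A) := by
  simp only [mem_image, not_exists, not_and]
  intro B hB h
  have h0B := zero_mem_of_mem_sumsetDivisors h0 hB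
  have hsup : B.sup id = j := by
    rw [← sup_id_intervalDivisorOf (A := A) ⟨0, h0B⟩, h, sup_id_range]
  have hrange : ∀ x ≤ j, x ∈ B := by
    intro x hx
    induction x with
    | zero => exact h0B
    | succ x ih =>
      refine succ_mem_of_mem_fillGaps (g := A.sup id + 1 - B.sup id) (by omega) (ih (by omega)) ?_
      exact (h ▸ mem_range.mpr (by omega) : x + 1 ∈ intervalDivisorOf A B)
  obtain ⟨C, rfl⟩ := (mem_sumsetDivisors ⟨0, h0⟩).mp hB
  exact hjA (subset_add_of_zero_mem h0 (hrange j le_rfl))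

lemma numDivisors_le_intervalDivCount_sup (h0 : 0 ∈ A) :
    numDivisors A ≤ intervalDivCount (A.sup id) := by
  rw [numDivisors_eq_card ⟨0, h0⟩, ← numDivisors_range,
    numDivisors_eq_card nonempty_range_add_one]
  exact card_le_card_of_injOn _ (fun _ hB ↦ intervalDivisorOf_mem_sumsetDivisors h0 hB)
    (intervalDivisorOf_injOn h0)

lemma numDivisors_lt_intervalDivCount_sup (h0 : 0 ∈ A) (hA : A ≠ range (A.sup id + 1)) :
    numDivisors A < intervalDivCount (A.sup id) := by
  obtain ⟨j, hjM, hjA⟩ : ∃ j < A.sup id, j ∉ A := by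
    by_contra! h
    refine hA (Subset.antisymm (subset_range_sup_id_succ A) fun x hx ↦ ?_)
    rcases (Nat.lt_succ_iff.mp (mem_range.mp hx)).lt_or_eq with hx | rfl
    · exact h x hx
    · exact sup_id_mem ⟨0, h0⟩
  rw [numDivisors_eq_card ⟨0, h0⟩, ← numDivisors_range,
    numDivisors_eq_card nonempty_range_add_one,
    ← card_image_of_injOn (intervalDivisorOf_injOn h0)]
  refine (card_lt_card (ssubset_insert
    (range_succ_notMem_image_intervalDivisorOf h0 hjA hjM))).trans_le
    (card_le_card (insert_subset (range_succ_mem_sumsetDivisors_range hjM.le) ?_))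
  exact image_subset_iff.mpr fun _ hB ↦ intervalDivisorOf_mem_sumsetDivisors h0 hB

lemma numDivisors_le_of_subset_range (h0 : 0 ∈ A) (hA : A ⊆ range (n + 1)) :
    numDivisors A ≤ intervalDivCount n :=
  (numDivisors_le_intervalDivCount_sup h0).trans
    (intervalDivCount.strictMono.monotone (sup_id_le_of_subset_range hA))

lemma eq_range_of_numDivisors_eq (h0 : 0 ∈ A) (hA : A ⊆ range (n + 1))
    (h : numDivisors A = intervalDivCount n) : A = range (n + 1) := by
  obtain hlt | rfl := (sup_id_le_of_subset_range hA).lt_or_eq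
  · exact absurd h ((numDivisors_le_intervalDivCount_sup h0).trans_lt
      (intervalDivCount.strictMono hlt)).ne
  · by_contra hne
    exact (numDivisors_lt_intervalDivCount_sup h0 hne).ne h

end IntervalComparison

section LeastElement

variable {A : Finset ℕ} {k : ℕ}

lemma image_sub_min'_subset_range (hA : A.Nonempty) (hAk : A ⊆ range (k + 1)) :
    A.image (· - A.min' hA) ⊆ range (k - A.min' hA + 1) := by
  intro x hx
  obtain ⟨a, ha, rfl⟩ := mem_image.mp hx
  have := mem_range.mp (hAk ha)
  exact mem_range.mpr (by omega)

lemma numDivisors_le_succ_min'_mul (hA : A.Nonempty) (hAk : A ⊆ range (k + 1)) :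
    numDivisors A ≤ (A.min' hA + 1) * intervalDivCount (k - A.min' hA) := by
  rw [numDivisors_eq_succ_min'_mul hA]
  exact Nat.mul_le_mul_left _ (numDivisors_le_of_subset_range (zero_mem_image_sub_min' hA)
    (image_sub_min'_subset_range hA hAk))

lemma eq_Icc_of_numDivisors_eq (hA : A.Nonempty) (hAk : A ⊆ range (k + 1))
    (h : numDivisors A = (A.min' hA + 1) * intervalDivCount (k - A.min' hA)) :
    A = Icc (A.min' hA) k := by
  rw [numDivisors_eq_succ_min'_mul hA, Nat.mul_left_cancel_iff (Nat.succ_pos _)] at h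
  rw [Icc_eq_range_add_singleton (Nat.le_of_lt_succ (mem_range.mp (hAk (min'_mem A hA)))),
    ← eq_range_of_numDivisors_eq (zero_mem_image_sub_min' hA)
      (image_sub_min'_subset_range hA hAk) h,
    image_sub_min'_add_singleton]

lemma numDivisors_Icc_one (hk : 1 ≤ k) :
    numDivisors (Icc 1 k) = 2 * intervalDivCount (k - 1) := by
  rw [Icc_eq_range_add_singleton hk, numDivisors_add_singleton (by simp), numDivisors_range]

end LeastElement

theorem stmt15 (k : ℕ) (hk : 1 ≤ k) :
    (∀ A : Finset ℕ, A.Nonempty → A ⊆ Finset.range (k + 1) →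
        numDivisors A ≤ numDivisors (Finset.Icc 1 k)) ∧
      (k ≠ 1 → k ≠ 3 →
        ∀ A : Finset ℕ, A.Nonempty → A ⊆ Finset.range (k + 1) →
          numDivisors A = numDivisors (Finset.Icc 1 k) → A = Finset.Icc 1 k) := by
  have hmin (A : Finset ℕ) (hA : A.Nonempty) (hAk : A ⊆ range (k + 1)) : A.min' hA ≤ k :=
    Nat.le_of_lt_succ (mem_range.mp (hAk (min'_mem A hA)))
  rw [numDivisors_Icc_one hk]
  refine ⟨fun A hA hAk ↦ ?_, fun hk1 hk3 A hA hAk hA_eq ↦ ?_⟩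
  · exact (numDivisors_le_succ_min'_mul hA hAk).trans
      (intervalDivCount.succ_mul_sub_le hk (hmin A hA hAk))
  · have hle := numDivisors_le_succ_min'_mul hA hAk
    have hbound := intervalDivCount.succ_mul_sub_le hk (hmin A hA hAk)
    have ht : A.min' hA = 1 :=
      intervalDivCount.eq_one_of_succ_mul_sub_eq hk1 hk3 (hmin A hA hAk) (by omega)
    rw [← ht]
    exact eq_Icc_of_numDivisors_eq hA hAk (by omega)
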